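/- Let x be a non-zerodivisor in a commutative ring S and let θ = (f, g) be a morphism of matrix factorizations of x from (F₁,G₁,φ₁,ψ₁) to (F₂,G₂,φ₂,ψ₂). Suppose there exist S-linear maps s₁, s₂ : G₁ → F₂ and t : F₁ → G₂ such that f − s₂∘φ₁ − ψ₂∘t ≡ 0 and g − t∘ψ₁ − φ₂∘s₁ ≡ 0 modulo x (i.e., their images lie in xF₂ and xG₂ respectively). Then θ is nullhomotopic as a morphism of matrix factorizations: there exist maps s : G₁ → F₂ and t' : F₁ → G₂ with f = s∘φ₁ + ψ₂∘t' and g = t'∘ψ₁ + φ₂∘s. -/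
import Mathlib

/-- The submodule `xM` of an `S`-module `M`. -/
def xSub {S : Type*} [CommRing S] (x : S) (M : Type*) [AddCommGroup M] [Module S M] :
    Submodule S M :=
  Ideal.span {x} • (⊤ : Submodule S M)

lemma mem_xSub_iff {S : Type*} [CommRing S] {x : S} {M : Type*} [AddCommGroup M] [Module S M]
    {m : M} : m ∈ xSub x M ↔ ∃ n : M, m = x • n := by
  constructor
  · intro h
    refine Submodule.smul_induction_on h ?_ ?_
    · intro r hr m' _
      obtain ⟨c, hc⟩ := Ideal.mem_span_singleton'.1 hr
      exact ⟨c • m', by rw [← hc, mul_smul, smul_comm]⟩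
    · rintro m₁ m₂ ⟨n₁, rfl⟩ ⟨n₂, rfl⟩
      exact ⟨n₁ + n₂, by rw [smul_add]⟩
  · rintro ⟨n, rfl⟩
    exact Submodule.smul_mem_smul (Ideal.mem_span_singleton_self x) trivial

lemma smul_inj_of_free {S : Type*} [CommRing S] {x : S} (hx : x ∈ nonZeroDivisors S)
    (M : Type*) [AddCommGroup M] [Module S M] [Module.Free S M]
    {v w : M} (h : x • v = x • w) : v = w := by
  let b := Module.Free.chooseBasis S M
  apply b.repr.injective
  ext i
  have h' : b.repr (x • v) i = b.repr (x • w) i := by rw [h]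
  rw [map_smul, map_smul] at h'
  exact (mul_cancel_left_mem_nonZeroDivisors hx).1 h'

/-- Divide a linear map landing in xN by x. -/
lemma exists_div {S : Type*} [CommRing S] {x : S} (hx : x ∈ nonZeroDivisors S)
    {M N : Type*} [AddCommGroup M] [Module S M] [AddCommGroup N] [Module S N]
    [Module.Free S N] (L : M →ₗ[S] N) (h : ∀ a : M, L a ∈ xSub x N) :
    ∃ L' : M →ₗ[S] N, L = x • L' := by
  have hch : ∀ a : M, ∃ n : N, L a = x • n := fun a => mem_xSub_iff.1 (h a)
  choose n hn using hch
  refine ⟨⟨⟨n, ?_⟩, ?_⟩, ?_⟩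
  · intro a b
    apply smul_inj_of_free hx
    rw [smul_add, ← hn, ← hn, ← hn, map_add]
  · intro c a
    apply smul_inj_of_free hx
    simp only [RingHom.id_apply]
    rw [← hn, map_smul, smul_comm x c, ← hn]
  · ext a
    exact hn a

/-- if a morphism θ = (f,g) of matrix factorizations of a non-zerodivisor x is
nullhomotopic modulo x (via not-necessarily-periodic homotopy data s₁, s₂, t), then θ is
nullhomotopic as a morphism of matrix factorizations: there are s, t' with
f = s∘φ₁ + ψ₂∘t' and g = t'∘ψ₁ + φ₂∘s. -/
theorem mf_nullhomotopic_of_nullhomotopic_mod_x {S : Type*} [CommRing S] (x : S)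
    (hx : x ∈ nonZeroDivisors S)
    (F₁ G₁ F₂ G₂ : Type*) [AddCommGroup F₁] [Module S F₁] [AddCommGroup G₁] [Module S G₁]
    [AddCommGroup F₂] [Module S F₂] [AddCommGroup G₂] [Module S G₂]
    [Module.Free S F₁] [Module.Finite S F₁] [Module.Free S G₁] [Module.Finite S G₁]
    [Module.Free S F₂] [Module.Finite S F₂] [Module.Free S G₂] [Module.Finite S G₂]
    (φ₁ : F₁ →ₗ[S] G₁) (ψ₁ : G₁ →ₗ[S] F₁) (φ₂ : F₂ →ₗ[S] G₂) (ψ₂ : G₂ →ₗ[S] F₂)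
    (hψφ₁ : ψ₁ ∘ₗ φ₁ = x • LinearMap.id) (hφψ₁ : φ₁ ∘ₗ ψ₁ = x • LinearMap.id)
    (hψφ₂ : ψ₂ ∘ₗ φ₂ = x • LinearMap.id) (hφψ₂ : φ₂ ∘ₗ ψ₂ = x • LinearMap.id)
    (f : F₁ →ₗ[S] F₂) (g : G₁ →ₗ[S] G₂)
    (hsq₁ : g ∘ₗ φ₁ = φ₂ ∘ₗ f) (hsq₂ : f ∘ₗ ψ₁ = ψ₂ ∘ₗ g)
    (s₁ s₂ : G₁ →ₗ[S] F₂) (t : F₁ →ₗ[S] G₂)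
    (h₁ : ∀ a : F₁, (f - s₂ ∘ₗ φ₁ - ψ₂ ∘ₗ t) a ∈ xSub x F₂)
    (h₂ : ∀ u : G₁, (g - t ∘ₗ ψ₁ - φ₂ ∘ₗ s₁) u ∈ xSub x G₂) :
    ∃ (s : G₁ →ₗ[S] F₂) (t' : F₁ →ₗ[S] G₂),
      f = s ∘ₗ φ₁ + ψ₂ ∘ₗ t' ∧ g = t' ∘ₗ ψ₁ + φ₂ ∘ₗ s := by
  obtain ⟨u, hu⟩ := exists_div hx _ h₁
  -- f = s₂∘φ₁ + ψ₂∘t + x • u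
  have hf : f = (s₂ + u ∘ₗ ψ₁) ∘ₗ φ₁ + ψ₂ ∘ₗ t := by
    have hfx : f = s₂ ∘ₗ φ₁ + ψ₂ ∘ₗ t + x • u := by
      have := hu
      rw [sub_sub, sub_eq_iff_eq_add'] at this
      rw [this]
    ext a
    have hxa : ψ₁ (φ₁ a) = x • a := by
      have := congrFun (congrArg DFunLike.coe hψφ₁) a
      simpa using this
    simp only [hfx, LinearMap.add_apply, LinearMap.comp_apply, LinearMap.smul_apply,
      LinearMap.add_apply, hxa, map_smul]
    abel
  refine ⟨s₂ + u ∘ₗ ψ₁, t, hf, ?_⟩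
  -- second equation: multiply by x
  ext b
  apply smul_inj_of_free hx
  have hxb : φ₁ (ψ₁ b) = x • b := by
    have := congrFun (congrArg DFunLike.coe hφψ₁) b
    simpa using this
  have key : x • g b = φ₂ (f (ψ₁ b)) := by
    have : g (φ₁ (ψ₁ b)) = φ₂ (f (ψ₁ b)) := congrFun (congrArg DFunLike.coe hsq₁) (ψ₁ b)
    rw [hxb, map_smul] at this
    exact this
  have hφψ : ∀ z : G₂, φ₂ (ψ₂ z) = x • z := by
    intro z
    have := congrFun (congrArg DFunLike.coe hφψ₂) z
    simpa using this
  rw [key]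
  have hfb := congrFun (congrArg DFunLike.coe hf) (ψ₁ b)
  rw [hfb]
  simp only [LinearMap.add_apply, LinearMap.comp_apply, map_add]
  rw [hxb, hφψ (t (ψ₁ b))]
  simp only [map_smul, smul_add]
  abel
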